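/- arXiv:2012.11249 — 2 statements merged into one kernel-verified Lean document; each statement's English description precedes it below -/
import Mathlib

section
/- Let A be a Noetherian integral domain with fraction field K such that A satisfies Serre's condition S₂. Then A equals the intersection, inside K, of the localizations A_𝔭 over all prime ideals 𝔭 of A with depth(A_𝔭) = 1. -/
/-- A local ring `R` has depth at least `n` if there is a regular sequence of length `n`
consisting of elements of the maximal ideal. -/
def depthGE (R : Type*) [CommRing R] [IsLocalRing R] (n : ℕ) : Prop :=
  ∃ rs : List R, rs.length = n ∧ (∀ x ∈ rs, x ∈ IsLocalRing.maximalIdeal R) ∧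
    RingTheory.Sequence.IsRegular R rs

/-- A local ring `R` has depth exactly `n`. -/
def hasDepthEq (R : Type*) [CommRing R] [IsLocalRing R] (n : ℕ) : Prop :=
  depthGE R n ∧ ¬ depthGE R (n + 1)

/-- Serre's condition `S₂`: for every prime `𝔭`, `depth A_𝔭 ≥ min (2, dim A_𝔭)`. -/
def IsS2Ring (A : Type*) [CommRing A] : Prop :=
  ∀ (P : Ideal A) [P.IsPrime] (n : ℕ),
    (n : WithBot (WithTop ℕ)) ≤ min ((2 : ℕ) : WithBot (WithTop ℕ))
      (ringKrullDim (Localization.AtPrime P)) →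
    depthGE (Localization.AtPrime P) n

open RingTheory.Sequence Pointwise

lemma smul_top_eq_span' {R : Type*} [CommRing R] (c : R) :
    c • (⊤ : Submodule R R) = Ideal.span {c} := by
  rw [← Submodule.ideal_span_singleton_smul, Ideal.smul_eq_mul, Ideal.mul_top]

/-- Elementary "exchange" lemma. -/
lemma exchange_lemma {R : Type*} [CommRing R] {m : Ideal R} {b y c d : R}
    (hb : IsSMulRegular R b) (hy : y ∉ Ideal.span {b})
    (hmy : ∀ t ∈ m, t * y ∈ Ideal.span {b})
    (hcm : c ∈ m) (hc : IsSMulRegular R c)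
    (hdm : d ∈ m) (hd : ∀ r : R, d * r ∈ Ideal.span {c} → r ∈ Ideal.span {c}) : False := by
  obtain ⟨z, hz⟩ := (Ideal.mem_span_singleton').mp (hmy c hcm)
  have key : ∀ t ∈ m, t * z ∈ Ideal.span {c} := by
    intro t ht
    obtain ⟨s, hs⟩ := (Ideal.mem_span_singleton').mp (hmy t ht)
    have : b • (t * z) = b • (c * s) := by
      simp only [smul_eq_mul]
      calc b * (t * z) = t * (z * b) := by ring
        _ = t * (c * y) := by rw [hz]
        _ = c * (t * y) := by ring
        _ = c * (s * b) := by rw [hs]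
        _ = b * (c * s) := by ring
    exact Ideal.mem_span_singleton'.mpr ⟨s, by rw [mul_comm]; exact (hb this).symm⟩
  have hzc : z ∉ Ideal.span {c} := by
    intro hzc
    obtain ⟨u, hu⟩ := Ideal.mem_span_singleton'.mp hzc
    apply hy
    have h2 : c • (u * b) = c • y := by
      simp only [smul_eq_mul]
      calc c * (u * b) = (u * c) * b := by ring
        _ = z * b := by rw [hu]
        _ = c * y := hz
    exact Ideal.mem_span_singleton'.mpr ⟨u, hc h2⟩
  exact hzc (hd z (key d hdm))

section Main

variable {A : Type*} [CommRing A] [IsDomain A] [IsNoetherianRing A]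

/-- In a domain, a nonzero element is `SMul`-regular. -/
lemma isSMulRegular_of_ne_zero {R : Type*} [CommRing R] [IsDomain R] {r : R} (hr : r ≠ 0) :
    IsSMulRegular R r := fun u v h => by
  simpa using mul_left_cancel₀ hr (by simpa [smul_eq_mul] using h)

/-- Regularity on the quotient `QuotSMulTop c R` in ideal terms. -/
lemma quot_regular_iff {R : Type*} [CommRing R] {c d : R}
    (h : IsSMulRegular (QuotSMulTop c R) d) :
    ∀ r : R, d * r ∈ Ideal.span {c} → r ∈ Ideal.span {c} := by
  intro r hr
  have h0 : (Submodule.Quotient.mk (d * r) : QuotSMulTop c R) = 0 := by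
    rw [Submodule.Quotient.mk_eq_zero, smul_top_eq_span']
    exact hr
  have : d • (Submodule.Quotient.mk r : QuotSMulTop c R) = d • (0 : QuotSMulTop c R) := by
    rw [smul_zero, ← Submodule.Quotient.mk_smul, smul_eq_mul]
    exact h0
  have := h this
  rwa [Submodule.Quotient.mk_eq_zero, smul_top_eq_span'] at this

omit [IsNoetherianRing A] in
lemma depth_one_lemma (P : Ideal A) [P.IsPrime] (b c : A) (hb0 : b ≠ 0) (hbP : b ∈ P)
    (hPc : ∀ p ∈ P, p * c ∈ Ideal.span {b})
    (hcP : ∀ s : A, s * c ∈ Ideal.span {b} → s ∈ P) :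
    hasDepthEq (Localization.AtPrime P) 1 := by
  set R := Localization.AtPrime P
  set f := algebraMap A R with hf_def
  have hf : Function.Injective f := IsLocalization.injective R P.primeCompl_le_nonZeroDivisors
  have hb' : f b ≠ 0 := fun h => hb0 (hf (by rw [h, map_zero]))
  have hbm : f b ∈ IsLocalRing.maximalIdeal R := by
    rw [← Localization.AtPrime.map_eq_maximalIdeal]
    exact Ideal.mem_map_of_mem _ hbP
  have hy : f c ∉ Ideal.span {f b} := by
    intro h
    obtain ⟨u, hu⟩ := Ideal.mem_span_singleton'.mp h
    obtain ⟨⟨r, s⟩, rfl⟩ := IsLocalization.mk'_surjective P.primeCompl u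
    have h1 : f (c * (s : A)) = f (b * r) := by
      calc f (c * (s : A)) = (IsLocalization.mk' R r s * f b) * f (s : A) := by
            rw [map_mul, hu]
        _ = (IsLocalization.mk' R r s * f (s : A)) * f b := by ring
        _ = f r * f b := by rw [IsLocalization.mk'_spec]
        _ = f (b * r) := by rw [map_mul, mul_comm]
    have h2 : (s : A) * c ∈ Ideal.span {b} := by
      refine Ideal.mem_span_singleton'.mpr ⟨r, ?_⟩
      have h3 := hf h1
      rw [mul_comm r b, mul_comm ((s : A)) c]
      exact h3.symm
    exact s.2 (hcP s h2)
  have hmy : ∀ t ∈ IsLocalRing.maximalIdeal R, t * f c ∈ Ideal.span {f b} := by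
    have hle : IsLocalRing.maximalIdeal R ≤ (Ideal.span {f b}).colon (Ideal.span {f c}) := by
      rw [← Localization.AtPrime.map_eq_maximalIdeal, Ideal.map_le_iff_le_comap]
      intro p hp
      rw [Ideal.mem_comap, Ideal.mem_colon_span_singleton]
      obtain ⟨t, ht⟩ := Ideal.mem_span_singleton'.mp (hPc p hp)
      exact Ideal.mem_span_singleton'.mpr ⟨f t, by rw [← map_mul, ht, ← map_mul]⟩
    intro t ht
    exact Ideal.mem_colon_span_singleton.mp (hle ht)
  constructor
  · refine ⟨[f b], rfl, by simpa using hbm, ?_⟩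
    rw [IsLocalRing.isRegular_iff_isWeaklyRegular_of_subset_maximalIdeal (by simpa using hbm),
      isWeaklyRegular_singleton_iff]
    exact isSMulRegular_of_ne_zero hb'
  · rintro ⟨rs, hlen, hmem, hreg⟩
    obtain ⟨c', d', rfl⟩ := List.length_eq_two.mp hlen
    have hw := hreg.toIsWeaklyRegular
    rw [isWeaklyRegular_cons_iff, isWeaklyRegular_singleton_iff] at hw
    exact exchange_lemma (isSMulRegular_of_ne_zero hb') hy hmy
      (hmem c' (by simp)) hw.1 (hmem d' (by simp)) (quot_regular_iff hw.2)

end Main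


/-- Let `A` be a Noetherian integral domain with fraction field `K` satisfying Serre's
condition `S₂`. Then `A` equals the intersection, inside `K`, of the localizations `A_𝔭`
over all primes `𝔭` with `depth A_𝔭 = 1`.  Here `x ∈ A_𝔭` inside `K` is expressed as
`∃ a s, s ∉ 𝔭 ∧ s·x = a`. -/
theorem S2_domain_eq_inter_depth_one_localizations
    (A : Type*) [CommRing A] [IsDomain A] [IsNoetherianRing A] (hS2 : IsS2Ring A) :
    Set.range (algebraMap A (FractionRing A)) =
      {x : FractionRing A | ∀ (P : Ideal A) [P.IsPrime],
        hasDepthEq (Localization.AtPrime P) 1 →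
        ∃ a s : A, s ∉ P ∧
          algebraMap A (FractionRing A) s * x = algebraMap A (FractionRing A) a} := by
  set K := FractionRing A
  set g := algebraMap A K with hg_def
  have hginj : Function.Injective g := IsFractionRing.injective A K
  ext x
  simp only [Set.mem_range, Set.mem_setOf_eq]
  constructor
  · rintro ⟨a, rfl⟩ P hP _
    exact ⟨a, 1, fun h => hP.ne_top (Ideal.eq_top_of_isUnit_mem P h isUnit_one),
      by rw [map_one, one_mul]⟩
  · intro hx
    by_contra hxA
    push_neg at hxA
    obtain ⟨⟨a, b⟩, hab⟩ := IsLocalization.surj (nonZeroDivisors A) x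
    dsimp only at hab
    have hb0 : (b : A) ≠ 0 := nonZeroDivisors.ne_zero b.2
    have hgb : g (b : A) ≠ 0 := fun h => hb0 (hginj (by rw [h, map_zero]))
    set I₀ := Ideal.span {(b : A)} with hI₀
    set D : A → Ideal A := fun c => I₀.colon (Ideal.span {c}) with hD
    have hmemD : ∀ t c : A, t ∈ D c ↔ t * c ∈ I₀ := fun t c => Ideal.mem_colon_span_singleton
    have ha : a ∉ I₀ := by
      intro h
      obtain ⟨t, ht⟩ := Ideal.mem_span_singleton.mp h
      apply hxA t
      have : x * g (b : A) = g t * g (b : A) := by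
        rw [hab, ht, map_mul, mul_comm]
      exact (mul_right_cancel₀ hgb this).symm
    set S : Set (Ideal A) := {J | ∃ c, c ∉ I₀ ∧ D a ≤ D c ∧ J = D c} with hS
    have hSne : S.Nonempty := ⟨D a, a, ha, le_rfl, rfl⟩
    obtain ⟨P, hPS, hPmax⟩ := set_has_maximal_iff_noetherian.mpr
      (inferInstanceAs (IsNoetherian A A)) S hSne
    obtain ⟨c, hc, hac, rfl⟩ := hPS
    have hprime : (D c).IsPrime := by
      refine ⟨?_, ?_⟩
      · intro h
        have : (1 : A) ∈ D c := h ▸ Submodule.mem_top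
        rw [hmemD, one_mul] at this
        exact hc this
      · intro u v huv
        rw [or_iff_not_imp_right]
        intro hv
        have hvc : v * c ∉ I₀ := fun h => hv ((hmemD v c).mpr h)
        have hle : D c ≤ D (v * c) := by
          intro t ht
          rw [hmemD] at ht ⊢
          have : t * (v * c) = v * (t * c) := by ring
          rw [this]
          exact Ideal.mul_mem_left _ v ht
        have heq : D (v * c) = D c := by
          by_contra hne
          exact hPmax (D (v * c)) ⟨v * c, hvc, le_trans hac hle, rfl⟩
            (lt_of_le_of_ne hle (fun h => hne h.symm))
        have hu : u ∈ D (v * c) := by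
          rw [hmemD]
          have : u * (v * c) = (u * v) * c := by ring
          rw [this]
          exact (hmemD _ _).mp huv
        exact heq ▸ hu
    haveI := hprime
    have hbP : (b : A) ∈ D c := (hmemD _ _).mpr (Ideal.mul_mem_right c _
      (Ideal.mem_span_singleton_self _))
    have hdepth : hasDepthEq (Localization.AtPrime (D c)) 1 :=
      depth_one_lemma (D c) (b : A) c hb0 hbP (fun p hp => (hmemD p c).mp hp)
        (fun s hs => (hmemD s c).mpr hs)
    obtain ⟨a', s, hs, heq⟩ := hx (D c) hdepth
    apply hs
    apply hac
    rw [hmemD]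
    refine Ideal.mem_span_singleton'.mpr ⟨a', ?_⟩
    apply hginj
    calc g (a' * (b : A)) = g a' * g (b : A) := map_mul g _ _
      _ = (g s * x) * g (b : A) := by rw [heq]
      _ = g s * (x * g (b : A)) := by ring
      _ = g s * g a := by rw [hab]
      _ = g (s * a) := (map_mul g _ _).symm
end

section
/- Let A be a Noetherian integral domain satisfying Serre's condition S₂ and let a, b ∈ A be nonzero elements. If a ∈ b·A_𝔭 for every prime ideal 𝔭 of A with depth(A_𝔭) = 1, then a ∈ (b). -/
open scoped Pointwise

lemma aux_depthGE_one {R : Type*} [CommRing R] [IsDomain R] [IsLocalRing R] (b : R)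
    (hb : b ≠ 0) (hbm : b ∈ IsLocalRing.maximalIdeal R) : depthGE R 1 := by
  refine ⟨[b], rfl, by simpa using hbm, ?_⟩
  rw [RingTheory.Sequence.isRegular_iff]
  constructor
  · rw [RingTheory.Sequence.isWeaklyRegular_singleton_iff]
    intro u v huv
    exact mul_left_cancel₀ hb huv
  · rw [Ideal.ofList_singleton, Ideal.smul_eq_mul, Ideal.mul_top]
    intro htop
    exact (IsLocalRing.mem_maximalIdeal b).mp hbm
      (Ideal.span_singleton_eq_top.mp htop.symm)

lemma aux_not_depthGE_two {R : Type*} [CommRing R] [IsDomain R] [IsLocalRing R]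
    (b c : R) (hb : b ≠ 0) (hc : c ∉ Ideal.span {b})
    (hmc : ∀ y ∈ IsLocalRing.maximalIdeal R, y * c ∈ Ideal.span {b}) :
    ¬ depthGE R 2 := by
  rintro ⟨rs, hlen, hmem, hreg⟩
  obtain ⟨x, y, rfl⟩ := List.length_eq_two.mp hlen
  have hx := hmem x (by simp)
  have hy := hmem y (by simp)
  rw [RingTheory.Sequence.isRegular_cons_iff] at hreg
  obtain ⟨hxreg, hreg⟩ := hreg
  rw [RingTheory.Sequence.isRegular_cons_iff] at hreg
  obtain ⟨hyreg, -⟩ := hreg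
  have hxne : x ≠ 0 := by
    rintro rfl
    exact one_ne_zero (hxreg (show (0:R) • (1:R) = (0:R) • (0:R) by simp))
  obtain ⟨d, hd⟩ := (Ideal.mem_span_singleton.mp (hmc x hx))
  obtain ⟨e, he⟩ := (Ideal.mem_span_singleton.mp (hmc y hy))
  have hde : y * d = x * e := by
    apply mul_left_cancel₀ hb
    calc b * (y * d) = y * (b * d) := by ring
    _ = y * (x * c) := by rw [hd]
    _ = x * (y * c) := by ring
    _ = x * (b * e) := by rw [he]
    _ = b * (x * e) := by ring
  have hsp : ((x • ⊤ : Submodule R R) : Submodule R R) = Ideal.span {x} := by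
    rw [← Submodule.ideal_span_singleton_smul, Ideal.smul_eq_mul, Ideal.mul_top]
  have hdx : d ∉ Ideal.span {x} := by
    intro hdx
    obtain ⟨t, ht⟩ := Ideal.mem_span_singleton.mp hdx
    apply hc
    rw [Ideal.mem_span_singleton]
    refine ⟨t, mul_left_cancel₀ hxne ?_⟩
    calc x * c = b * d := hd
    _ = b * (x * t) := by rw [ht]
    _ = x * (b * t) := by ring
  have hmk : (Submodule.Quotient.mk d : QuotSMulTop x R) = 0 := by
    apply hyreg
    show y • (Submodule.Quotient.mk d : QuotSMulTop x R) = y • (0 : QuotSMulTop x R)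
    rw [smul_zero, ← Submodule.Quotient.mk_smul, smul_eq_mul, hde,
      Submodule.Quotient.mk_eq_zero, hsp]
    exact Ideal.mem_span_singleton.mpr ⟨e, rfl⟩
  rw [Submodule.Quotient.mk_eq_zero, hsp] at hmk
  exact hdx hmk

/-- Let `A` be a Noetherian integral domain satisfying `S₂` and let `a, b ∈ A` be nonzero.
If `a ∈ b·A_𝔭` for every prime `𝔭` with `depth A_𝔭 = 1`, then `a ∈ (b)`. -/
theorem mem_span_of_mem_depth_one_localizations
    (A : Type*) [CommRing A] [IsDomain A] [IsNoetherianRing A] (hS2 : IsS2Ring A)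
    (a b : A) (ha : a ≠ 0) (hb : b ≠ 0)
    (h : ∀ (P : Ideal A) [P.IsPrime], hasDepthEq (Localization.AtPrime P) 1 →
      algebraMap A (Localization.AtPrime P) a ∈
        Ideal.span {algebraMap A (Localization.AtPrime P) b}) :
    a ∈ Ideal.span {b} := by
  by_contra hab
  have hsmul : ∀ r z : A, r • (Ideal.Quotient.mk (Ideal.span {b}) z)
      = Ideal.Quotient.mk (Ideal.span {b}) (r * z) := fun r z => by
    rw [Algebra.smul_def, Ideal.Quotient.algebraMap_eq, ← map_mul]
  have hx : (Ideal.Quotient.mk (Ideal.span {b}) a) ≠ 0 := by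
    rw [Ne, Ideal.Quotient.eq_zero_iff_mem]; exact hab
  obtain ⟨P, hP, hPle⟩ := exists_le_isAssociatedPrime_of_isNoetherianRing A _ hx
  obtain ⟨hPprime, cbar, hPeq⟩ := isAssociatedPrime_iff.mp hP
  haveI := hPprime
  obtain ⟨c, rfl⟩ := Ideal.Quotient.mk_surjective cbar
  have hmemP : ∀ r : A, r ∈ P ↔ r * c ∈ Ideal.span {b} := by
    intro r
    rw [hPeq, Submodule.mem_colon_singleton, Submodule.mem_bot, hsmul,
      Ideal.Quotient.eq_zero_iff_mem]
  have haP : ∀ r : A, r * a ∈ Ideal.span {b} → r ∈ P := fun r hr =>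
    hPle ((Submodule.mem_colon_singleton).mpr
      (by rw [Submodule.mem_bot, hsmul, Ideal.Quotient.eq_zero_iff_mem]; exact hr))
  have hcb : c ∉ Ideal.span {b} := fun hcb =>
    hPprime.ne_top ((Ideal.eq_top_iff_one _).mpr ((hmemP 1).mpr (by simpa using hcb)))
  have hbP : b ∈ P := (hmemP b).mpr (Ideal.mem_span_singleton.mpr ⟨c, rfl⟩)
  -- set up the localization
  have hle : P.primeCompl ≤ nonZeroDivisors A := fun s hs =>
    mem_nonZeroDivisors_of_ne_zero (fun h0 => hs (h0 ▸ P.zero_mem))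
  haveI : IsDomain (Localization.AtPrime P) := IsLocalization.isDomain_localization hle
  set f := algebraMap A (Localization.AtPrime P) with hf
  have hinj : Function.Injective f := IsLocalization.injective _ hle
  have hfb : f b ≠ 0 := fun h0 => hb (hinj (by simpa using h0))
  have hspan : Ideal.span {f b} = Ideal.map f (Ideal.span {b}) := by
    rw [Ideal.map_span, Set.image_singleton]
  have key : ∀ z : A, f z ∈ Ideal.span {f b} →
      ∃ s ∈ P.primeCompl, z * s ∈ Ideal.span {b} := by
    intro z hz
    rw [hspan, IsLocalization.mem_map_algebraMap_iff P.primeCompl] at hz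
    obtain ⟨⟨i, s⟩, hzs⟩ := hz
    refine ⟨s, s.2, ?_⟩
    have hzi : f (z * (s : A)) = f i := by rw [map_mul]; exact hzs
    rw [hinj hzi]; exact i.2
  have hbm' : f b ∈ IsLocalRing.maximalIdeal (Localization.AtPrime P) := by
    rw [← Localization.AtPrime.map_eq_maximalIdeal]
    exact Ideal.mem_map_of_mem f hbP
  have hc' : f c ∉ Ideal.span {f b} := by
    intro hc'
    obtain ⟨s, hs, hcs⟩ := key c hc'
    exact hs ((hmemP s).mpr (by rwa [mul_comm] at hcs))
  have hmax : ∀ y ∈ IsLocalRing.maximalIdeal (Localization.AtPrime P),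
      y * f c ∈ Ideal.span {f b} := by
    intro y hy
    rw [← Localization.AtPrime.map_eq_maximalIdeal,
      IsLocalization.mem_map_algebraMap_iff P.primeCompl] at hy
    obtain ⟨⟨p, s⟩, hys⟩ := hy
    rw [hspan, IsLocalization.mem_map_algebraMap_iff P.primeCompl]
    refine ⟨⟨⟨(p : A) * c, (hmemP p).mp p.2⟩, s⟩, ?_⟩
    show y * f c * f s = f ((p : A) * c)
    rw [map_mul]
    calc y * f c * f s = (y * f s) * f c := by ring
    _ = f p * f c := by rw [hys]
  have hdepth : hasDepthEq (Localization.AtPrime P) 1 :=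
    ⟨aux_depthGE_one (f b) hfb hbm', aux_not_depthGE_two (f b) (f c) hfb hc' hmax⟩
  obtain ⟨s, hs, has⟩ := key a (h P hdepth)
  exact hs (haP s (by rwa [mul_comm] at has))
end
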